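/- arXiv:1403.6324 — 3 statements merged into one kernel-verified Lean document; each statement's English description precedes it below -/
import Mathlib

section
/- If A and C solve the system A'(s) + 2r·A(s) + ((α−r)²/(γσ²))·C(s) = 0, C'(s) + r·C(s) = 0 on [0,T] with A(T) = C(T) = 1, and r ≠ 0, then the equilibrium strategy φ(s,y) = ((α−r)/(γσ²))·(C(s)/A(s))·y satisfies φ(s,y) = ((α−r)/(γσ²))·( e^{r(T−s)} + ((α−r)²/(rγσ²))(e^{r(T−s)} − 1) )^{−1}·y for all (s,y) ∈ [0,T]×ℝ, provided A(s) ≠ 0. -/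
/-!
The system is linear with terminal data at `T`, so its solution is unique: if `f' = c f` then
`f · e^{-c s}` is constant, hence `f ≡ 0` once `f T = 0`. So `C = E` and `A = E² + (θ/r)(E² − E)`,
where `E = e^{r(T−s)}` and `θ = (α−r)²/(γσ²)`, and `C/A = (E + (θ/r)(E − 1))⁻¹`.
-/

open Real Set

theorem eq_zero_of_hasDerivAt_mul_self {a b c : ℝ} {f : ℝ → ℝ}
    (hf : ∀ x ∈ Icc a b, HasDerivAt f (c * f x) x) (hb : f b = 0) :
    ∀ x ∈ Icc a b, f x = 0 := by
  have hderiv : ∀ x ∈ Icc a b, HasDerivAt (fun t => f t * exp (-(c * t))) 0 x := by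
    intro x hx
    refine ((hf x hx).mul ((hasDerivAt_id x).const_mul c).neg.exp).congr_deriv ?_
    simp only [id, mul_one]
    ring
  have hconst := constant_of_has_deriv_right_zero
    (fun x hx => (hderiv x hx).continuousAt.continuousWithinAt)
    (fun x hx => (hderiv x (Ico_subset_Icc_self hx)).hasDerivWithinAt)
  intro x hx
  have hxb : f x * exp (-(c * x)) = f b * exp (-(c * b)) := by
    rw [hconst x hx, hconst b ⟨hx.1.trans hx.2, le_rfl⟩]
  rw [hb, zero_mul] at hxb
  exact (mul_eq_zero.1 hxb).resolve_right (exp_ne_zero _)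

noncomputable section ExplicitSolution

variable (r θ T : ℝ)

def equilibriumC (s : ℝ) : ℝ := exp (r * (T - s))

def equilibriumA (s : ℝ) : ℝ :=
  equilibriumC r T s ^ 2 + θ / r * (equilibriumC r T s ^ 2 - equilibriumC r T s)

theorem equilibriumC_self : equilibriumC r T T = 1 := by
  simp [equilibriumC]

theorem equilibriumA_self : equilibriumA r θ T T = 1 := by
  simp [equilibriumA, equilibriumC_self]

theorem equilibriumC_ne_zero (s : ℝ) : equilibriumC r T s ≠ 0 :=
  exp_ne_zero _

theorem equilibriumA_eq_mul (s : ℝ) :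
    equilibriumA r θ T s
      = equilibriumC r T s * (equilibriumC r T s + θ / r * (equilibriumC r T s - 1)) := by
  unfold equilibriumA
  ring

theorem hasDerivAt_equilibriumC (s : ℝ) :
    HasDerivAt (equilibriumC r T) (-(r * equilibriumC r T s)) s := by
  refine (((hasDerivAt_id s).const_sub T).const_mul r).exp.congr_deriv ?_
  simp only [equilibriumC, id]
  ring

variable {r} in
theorem hasDerivAt_equilibriumA (hr : r ≠ 0) (s : ℝ) :
    HasDerivAt (equilibriumA r θ T)
      (-(2 * r * equilibriumA r θ T s + θ * equilibriumC r T s)) s := by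
  have hE := hasDerivAt_equilibriumC r T s
  refine ((hE.pow 2).add (((hE.pow 2).sub hE).const_mul (θ / r))).congr_deriv ?_
  simp only [equilibriumA]
  field_simp
  ring

end ExplicitSolution

theorem eq_equilibriumC_of_hasDerivAt {a r T : ℝ} {C : ℝ → ℝ}
    (hC : ∀ s ∈ Icc a T, HasDerivAt C (-(r * C s)) s) (hCT : C T = 1) :
    ∀ s ∈ Icc a T, C s = equilibriumC r T s := by
  have hdiff := eq_zero_of_hasDerivAt_mul_self (c := -r) (f := C - equilibriumC r T)
    (fun s hs => by
      refine ((hC s hs).sub (hasDerivAt_equilibriumC r T s)).congr_deriv ?_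
      simp only [Pi.sub_apply]
      ring)
    (by simp [hCT, equilibriumC_self])
  exact fun s hs => sub_eq_zero.1 (hdiff s hs)

theorem eq_equilibriumA_of_hasDerivAt {a r θ T : ℝ} (hr : r ≠ 0) {A C : ℝ → ℝ}
    (hA : ∀ s ∈ Icc a T, HasDerivAt A (-(2 * r * A s + θ * C s)) s)
    (hC : ∀ s ∈ Icc a T, HasDerivAt C (-(r * C s)) s) (hAT : A T = 1) (hCT : C T = 1) :
    ∀ s ∈ Icc a T, A s = equilibriumA r θ T s := by
  have hCs := eq_equilibriumC_of_hasDerivAt hC hCT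
  have hdiff := eq_zero_of_hasDerivAt_mul_self (c := -(2 * r)) (f := A - equilibriumA r θ T)
    (fun s hs => by
      refine ((hA s hs).sub (hasDerivAt_equilibriumA θ T hr s)).congr_deriv ?_
      simp only [Pi.sub_apply, hCs s hs]
      ring)
    (by simp [hAT, equilibriumA_self])
  exact fun s hs => sub_eq_zero.1 (hdiff s hs)

theorem stmt_2_general (r α σ γ T : ℝ) (hr : r ≠ 0)
    (A C : ℝ → ℝ)
    (hA : ∀ s ∈ Icc (0:ℝ) T,
        HasDerivAt A (-(2 * r * A s + ((α - r) ^ 2 / (γ * σ ^ 2)) * C s)) s)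
    (hC : ∀ s ∈ Icc (0:ℝ) T, HasDerivAt C (-(r * C s)) s)
    (hAT : A T = 1) (hCT : C T = 1) :
    ∀ s ∈ Icc (0:ℝ) T, A s ≠ 0 →
      ∀ y : ℝ,
        ((α - r) / (γ * σ ^ 2)) * (C s / A s) * y
          = ((α - r) / (γ * σ ^ 2))
              * (Real.exp (r * (T - s))
                  + ((α - r) ^ 2 / (r * γ * σ ^ 2)) * (Real.exp (r * (T - s)) - 1))⁻¹ * y := by
  intro s hs _ y
  have hθ : (α - r) ^ 2 / (r * γ * σ ^ 2) = (α - r) ^ 2 / (γ * σ ^ 2) / r := by ring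
  rw [eq_equilibriumC_of_hasDerivAt hC hCT s hs,
    eq_equilibriumA_of_hasDerivAt hr hA hC hAT hCT s hs, equilibriumA_eq_mul,
    div_mul_cancel_left₀ (equilibriumC_ne_zero r T s), hθ]
  rfl

/-- If A, C solve the ODE system with A(T) = C(T) = 1 and r ≠ 0, the equilibrium strategy
φ(s,y) = ((α−r)/(γσ²))·(C(s)/A(s))·y has the explicit form
((α−r)/(γσ²))·(e^{r(T−s)} + ((α−r)²/(rγσ²))(e^{r(T−s)} − 1))⁻¹·y, wherever A(s) ≠ 0. -/
theorem stmt_2 (r α σ γ T : ℝ) (hr : r ≠ 0) (hσ : σ ≠ 0) (hγ : 0 < γ) (hT : 0 < T)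
    (A C : ℝ → ℝ)
    (hA : ∀ s ∈ Icc (0:ℝ) T,
        HasDerivAt A (-(2 * r * A s + ((α - r) ^ 2 / (γ * σ ^ 2)) * C s)) s)
    (hC : ∀ s ∈ Icc (0:ℝ) T, HasDerivAt C (-(r * C s)) s)
    (hAT : A T = 1) (hCT : C T = 1) :
    ∀ s ∈ Icc (0:ℝ) T, A s ≠ 0 →
      ∀ y : ℝ,
        ((α - r) / (γ * σ ^ 2)) * (C s / A s) * y
          = ((α - r) / (γ * σ ^ 2))
              * (Real.exp (r * (T - s))
                  + ((α - r) ^ 2 / (r * γ * σ ^ 2)) * (Real.exp (r * (T - s)) - 1))⁻¹ * y :=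
  stmt_2_general r α σ γ T hr A C hA hC hAT hCT
end

section
/- Suppose H : U → ℝ is concave where U ⊆ ℝ is convex, P ≤ 0, σ : U → ℝ is affine, and û ∈ U. Define 𝓗(v) = H(v) + (P/2)·(σ(v) − σ(û))². Then û maximizes 𝓗 over U if and only if û maximizes H over U. -/
/-!
Moving from `û` towards `v ∈ U` by a step `t`, concavity raises `H` by at least
`t (H v - H û)`, while the penalty `(P/2)(σ(·) - σ(û))²` changes only by `O(t²)` because `σ` is
affine. Maximality of `𝓗` at `û` therefore gives `t (H v - H û) ≤ K t²` for all small `t > 0`,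
whence `H v ≤ H û`. The converse holds because the penalty is nonpositive and vanishes at `û`.
-/

open Set AffineMap Filter Topology

lemma nonpos_of_forall_mul_le_sq_mul {a K : ℝ} (h : ∀ t ∈ Ioc (0 : ℝ) 1, t * a ≤ t ^ 2 * K) :
    a ≤ 0 := by
  have hlim : Tendsto (fun t : ℝ => t * K) (𝓝[>] 0) (𝓝 0) :=
    ((continuous_mul_const K).tendsto' 0 0 (zero_mul K)).mono_left nhdsWithin_le_nhds
  refine ge_of_tendsto hlim ?_
  filter_upwards [Ioc_mem_nhdsGT (zero_lt_one' ℝ)] with t ht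
  have := h t ht
  nlinarith [ht.1]

variable {E : Type*} [AddCommGroup E] [Module ℝ E]

lemma ConcaveOn.isMaxOn_of_isMaxOn_add_sq_affine {U : Set E} (hU : Convex ℝ U) {H : E → ℝ}
    (hH : ConcaveOn ℝ U H) (P : ℝ) (σ : E →ᵃ[ℝ] ℝ) {u : E} (hu : u ∈ U)
    (hmax : IsMaxOn (fun v => H v + P / 2 * (σ v - σ u) ^ 2) U u) : IsMaxOn H U u := by
  intro v hv
  refine sub_nonpos.1 (nonpos_of_forall_mul_le_sq_mul (K := -P / 2 * (σ v - σ u) ^ 2) ?_)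
  intro t ht
  have hmem : lineMap u v t ∈ U := hU.lineMap_mem hu hv (Ioc_subset_Icc_self ht)
  have hσ : σ (lineMap u v t) - σ u = t * (σ v - σ u) := by
    rw [apply_lineMap, lineMap_apply_ring']
    ring
  have hpen : H (lineMap u v t) + P / 2 * (t * (σ v - σ u)) ^ 2 ≤ H u := by
    have h := hmax hmem
    simp only [mem_ofPred_eq, hσ, sub_self] at h
    simpa using h
  have hconc : (1 - t) * H u + t * H v ≤ H (lineMap u v t) := by
    simpa [lineMap_apply_module] using hH.2 hu hv (sub_nonneg.2 ht.2) ht.1.le (by ring)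
  nlinarith

lemma isMaxOn_add_sq_affine_iff {U : Set E} (hU : Convex ℝ U) {H : E → ℝ}
    (hH : ConcaveOn ℝ U H) {P : ℝ} (hP : P ≤ 0) (σ : E →ᵃ[ℝ] ℝ) {u : E} (hu : u ∈ U) :
    IsMaxOn (fun v => H v + P / 2 * (σ v - σ u) ^ 2) U u ↔ IsMaxOn H U u := by
  refine ⟨hH.isMaxOn_of_isMaxOn_add_sq_affine hU P σ hu, fun hmax v hv => ?_⟩
  have hpen : P / 2 * (σ v - σ u) ^ 2 ≤ 0 :=
    mul_nonpos_of_nonpos_of_nonneg (by linarith) (sq_nonneg _)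
  have h : H v ≤ H u := hmax hv
  simp only [mem_ofPred_eq, sub_self]
  linarith

/-- Proposition 3.1 (deterministic 1-d version): for H concave on a convex U ⊆ ℝ, P ≤ 0 and
σ affine, û maximizes 𝓗(v) = H(v) + (P/2)(σ(v) − σ(û))² over U iff û maximizes H over U. -/
theorem stmt_15 (U : Set ℝ) (hU : Convex ℝ U) (H : ℝ → ℝ) (hconc : ConcaveOn ℝ U H)
    (P : ℝ) (hP : P ≤ 0) (σ : ℝ → ℝ) (c d : ℝ) (hσ : σ = fun v => c * v + d)
    (uh : ℝ) (huh : uh ∈ U) :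
    IsMaxOn (fun v => H v + (P / 2) * (σ v - σ uh) ^ 2) U uh ↔ IsMaxOn H U uh := by
  subst hσ
  let σ' : ℝ →ᵃ[ℝ] ℝ :=
    { toFun := fun v => c * v + d
      linear := c • LinearMap.id
      map_vadd' := fun p v => by simp only [vadd_eq_add, LinearMap.smul_apply,
        LinearMap.id_apply, smul_eq_mul]; ring }
  exact isMaxOn_add_sq_affine_iff hU hconc hP σ' huh
end

section
/- Let a ≠ 0 or a = 0, b ∈ ℝ, and let v, w : [0,T] → ℝ solve v'(s) = −2a·v(s), w'(s) = −b²·v(s) + b²·β(s)·w(s) with v(T) = γ > 0, w(T) = 1, where β(s) = γe^{a(T−s)} ≥ 0 and b² ≥ 0. Then v(s) = γ·e^{2a(T−s)} > 0 for all s ∈ [0,T], and w(s) ≥ 1 for all s ∈ [0,T]; in particular α(s) = v(s)/w(s) is well-defined and positive on [0,T]. -/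
/-!
Since `v' = -2a v`, `v s * exp (-2a s)` is constant, so `v s = γ e^{2a(T-s)} > 0`. Then
`w' = -b² v + b² β w ≤ b² β w`, and with the integrating factor `exp (∫ t in s..T, b² β t)`
the product `w s * exp (∫ t in s..T, b² β t)` is antitone; comparing with its value `1` at
`s = T` gives `w s ≥ exp (-∫ t in s..T, b² β t) > 0`.
-/

open Real Set

theorem eq_mul_exp_of_hasDerivAt_const_mul {k t₀ T : ℝ} {v : ℝ → ℝ}
    (hv : ∀ s ∈ Icc t₀ T, HasDerivAt v (k * v s) s) :
    ∀ s ∈ Icc t₀ T, v s = v T * exp (k * (s - T)) := by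
  intro s hs
  set g : ℝ → ℝ := fun s => v s * exp (-(k * s))
  have hg : ∀ x ∈ Icc t₀ T, HasDerivAt g 0 x := by
    intro x hx
    have he : HasDerivAt (fun y => exp (-(k * y))) (exp (-(k * x)) * -k) x := by
      simpa using ((hasDerivAt_id x).const_mul k).neg.exp
    exact ((hv x hx).fun_mul he).congr_deriv (by ring)
  have hconst := constant_of_has_deriv_right_zero
    (fun x hx => (hg x hx).continuousAt.continuousWithinAt)
    (fun x hx => (hg x (Ico_subset_Icc_self hx)).hasDerivWithinAt)
  have hgsT : g s = g T := (hconst s hs).trans (hconst T ⟨hs.1.trans hs.2, le_rfl⟩).symm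
  calc v s = g s * exp (k * s) := by
        simp only [g, mul_assoc, ← exp_add, neg_add_cancel, exp_zero, mul_one]
    _ = g T * exp (k * s) := by rw [hgsT]
    _ = v T * exp (k * (s - T)) := by
      simp only [g, mul_assoc, ← exp_add]
      ring_nf

theorem mul_exp_neg_integral_le_of_hasDerivAt_le_mul {c w w' : ℝ → ℝ} {t₀ T : ℝ}
    (hc : Continuous c) (hw : ∀ s ∈ Icc t₀ T, HasDerivAt w (w' s) s)
    (hle : ∀ s ∈ Icc t₀ T, w' s ≤ c s * w s) :
    ∀ s ∈ Icc t₀ T, w T * exp (-∫ t in s..T, c t) ≤ w s := by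
  intro s hs
  set I : ℝ → ℝ := fun s => ∫ t in s..T, c t
  set h : ℝ → ℝ := fun s => w s * exp (I s)
  have hI : ∀ x, HasDerivAt I (-c x) x := fun x =>
    intervalIntegral.integral_hasDerivAt_left (hc.intervalIntegrable x T)
      (hc.stronglyMeasurableAtFilter _ _) hc.continuousAt
  have hh : ∀ x ∈ Icc t₀ T, HasDerivAt h ((w' x - c x * w x) * exp (I x)) x := by
    intro x hx
    exact ((hw x hx).fun_mul (hI x).exp).congr_deriv (by ring)
  have hanti : AntitoneOn h (Icc t₀ T) := by
    refine antitoneOn_of_hasDerivWithinAt_nonpos (convex_Icc t₀ T)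
      (f' := fun x => (w' x - c x * w x) * exp (I x))
      (fun x hx => (hh x hx).continuousAt.continuousWithinAt) (fun x hx => ?_) (fun x hx => ?_)
    all_goals rw [interior_Icc] at hx
    · exact (hh x (Ioo_subset_Icc_self hx)).hasDerivWithinAt
    · exact mul_nonpos_of_nonpos_of_nonneg (sub_nonpos.2 (hle x (Ioo_subset_Icc_self hx)))
        (exp_pos _).le
  have hhT : h T = w T := by simp [h, I]
  have hTs : w T ≤ w s * exp (I s) := hhT ▸ hanti hs ⟨hs.1.trans hs.2, le_rfl⟩ hs.2
  calc w T * exp (-I s) ≤ w s * exp (I s) * exp (-I s) := by gcongr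
    _ = w s := by rw [mul_assoc, ← exp_add, add_neg_cancel, exp_zero, mul_one]

theorem stmt_19_general (a b γ T : ℝ) (hγ : 0 < γ)
    (β v w : ℝ → ℝ) (hβ : β = fun s => γ * Real.exp (a * (T - s)))
    (hv : ∀ s ∈ Icc (0:ℝ) T, HasDerivAt v (-(2 * a * v s)) s)
    (hw : ∀ s ∈ Icc (0:ℝ) T, HasDerivAt w (-(b ^ 2 * v s) + b ^ 2 * β s * w s) s)
    (hvT : v T = γ) (hwT : w T = 1) :
    ∀ s ∈ Icc (0:ℝ) T,
      v s = γ * Real.exp (2 * a * (T - s)) ∧ 0 < v s ∧ 0 < w s ∧ 0 < v s / w s := by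
  have hv_eq : ∀ s ∈ Icc (0:ℝ) T, v s = γ * exp (2 * a * (T - s)) := by
    intro s hs
    rw [eq_mul_exp_of_hasDerivAt_const_mul (k := -(2 * a)) (v := v)
      (fun x hx => by simpa only [neg_mul] using hv x hx) s hs, hvT]
    ring_nf
  have hv_pos : ∀ s ∈ Icc (0:ℝ) T, 0 < v s := fun s hs => by rw [hv_eq s hs]; positivity
  have hw_ge := mul_exp_neg_integral_le_of_hasDerivAt_le_mul (c := fun s => b ^ 2 * β s)
    (by subst hβ; fun_prop) hw
    (fun s hs => by linarith [mul_nonneg (sq_nonneg b) (hv_pos s hs).le])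
  intro s hs
  have hw_pos : 0 < w s := lt_of_lt_of_le (by rw [hwT]; positivity) (hw_ge s hs)
  exact ⟨hv_eq s hs, hv_pos s hs, hw_pos, div_pos (hv_pos s hs) hw_pos⟩

/-- Solvability of the Riccati linearization: if v' = −2a·v, w' = −b²·v + b²·β·w on [0,T]
with v(T) = γ > 0, w(T) = 1 and β(s) = γe^{a(T−s)}, then v(s) = γ·e^{2a(T−s)} > 0 and
w(s) > 0 on [0,T]; in particular α = v/w is well-defined and positive on [0,T]. -/
theorem stmt_19 (a b γ T : ℝ) (hγ : 0 < γ) (hT : 0 < T)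
    (β v w : ℝ → ℝ) (hβ : β = fun s => γ * Real.exp (a * (T - s)))
    (hv : ∀ s ∈ Icc (0:ℝ) T, HasDerivAt v (-(2 * a * v s)) s)
    (hw : ∀ s ∈ Icc (0:ℝ) T, HasDerivAt w (-(b ^ 2 * v s) + b ^ 2 * β s * w s) s)
    (hvT : v T = γ) (hwT : w T = 1) :
    ∀ s ∈ Icc (0:ℝ) T,
      v s = γ * Real.exp (2 * a * (T - s)) ∧ 0 < v s ∧ 0 < w s ∧ 0 < v s / w s :=
  stmt_19_general a b γ T hγ β v w hβ hv hw hvT hwT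
end
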